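/- For every natural number n and every integer k ≥ 2, the associated Bell numbers satisfy B_{n,≥k} = B_{n,≥k-1} - ∑_{i=1}^{⌊n/(k-1)⌋} n! / ( ((k-1)!)^i · (n-(k-1)i)! · i! ) · B_{n-(k-1)i,≥k}. -/

import Mathlib

/-- The restricted Bell number `B_{n,≤m}`: the number of partitions of an `n`-element set
into nonempty blocks each of size at most `m`. -/
noncomputable def restrictedBell (n m : ℕ) : ℕ :=
  Nat.card {P : Finpartition (Finset.univ : Finset (Fin n)) // ∀ b ∈ P.parts, b.card ≤ m}

/-- The associated Bell number `B_{n,≥m}`: the number of partitions of an `n`-element set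
into nonempty blocks each of size at least `m`. -/
noncomputable def associatedBell (n m : ℕ) : ℕ :=
  Nat.card {P : Finpartition (Finset.univ : Finset (Fin n)) // ∀ b ∈ P.parts, m ≤ b.card}

/-- The Bell number `B_n`: the number of partitions of an `n`-element set. -/
noncomputable def bell (n : ℕ) : ℕ :=
  Nat.card (Finpartition (Finset.univ : Finset (Fin n)))

/-- The restricted factorial number `A_{n,≤m}`: the number of permutations of `n` elements
all of whose cycles have length at most `m`. -/
noncomputable def restrictedFactorial (n m : ℕ) : ℕ :=
  Nat.card {σ : Equiv.Perm (Fin n) // ∀ x, Function.minimalPeriod σ x ≤ m}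

/-- The associated factorial number `A_{n,≥m}`: the number of permutations of `n` elements
all of whose cycles have length at least `m`. -/
noncomputable def associatedFactorial (n m : ℕ) : ℕ :=
  Nat.card {σ : Equiv.Perm (Fin n) // ∀ x, m ≤ Function.minimalPeriod σ x}

open Finset

variable {α β : Type*} [DecidableEq α] [DecidableEq β]

/-- Push a finpartition forward along an embedding. -/
def Finpartition.embMap (f : α ↪ β) {s : Finset α} (P : Finpartition s) :
    Finpartition (s.map f) where
  parts := P.parts.image (Finset.map f)
  supIndep := by
    rw [Finset.supIndep_iff_pairwiseDisjoint]
    rintro a ha b hb hab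
    simp only [coe_image, Set.mem_image, mem_coe] at ha hb
    obtain ⟨c, hc, rfl⟩ := ha
    obtain ⟨d, hd, rfl⟩ := hb
    have hcd : c ≠ d := fun h => hab (by rw [h])
    simpa [Function.onFun, Finset.disjoint_map] using P.disjoint hc hd hcd
  sup_parts := by
    ext y
    simp only [Finset.mem_sup, mem_image, id, Finset.mem_map]
    constructor
    · rintro ⟨-, ⟨c, hc, rfl⟩, hy⟩
      obtain ⟨a, ha, rfl⟩ := Finset.mem_map.1 hy
      exact ⟨a, P.le hc ha, rfl⟩
    · rintro ⟨a, ha, rfl⟩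
      obtain ⟨c, hc, hac⟩ := P.exists_mem ha
      exact ⟨c.map f, ⟨c, hc, rfl⟩, Finset.mem_map_of_mem f hac⟩
  bot_notMem := by
    simp only [bot_eq_empty, mem_image]
    rintro ⟨c, hc, hce⟩
    rw [Finset.map_eq_empty] at hce
    subst hce; exact P.bot_notMem hc

example : True := trivial

/-- Pull a finpartition of `s.map f` back to `s`. -/
def Finpartition.embComap (f : α ↪ β) {s : Finset α} (Q : Finpartition (s.map f)) :
    Finpartition s where
  parts := Q.parts.image fun b => s.filter fun a => f a ∈ b
  supIndep := by
    rw [Finset.supIndep_iff_pairwiseDisjoint]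
    rintro a ha b hb hab
    simp only [coe_image, Set.mem_image, mem_coe] at ha hb
    obtain ⟨c, hc, rfl⟩ := ha
    obtain ⟨d, hd, rfl⟩ := hb
    have hcd : c ≠ d := fun h => hab (by rw [h])
    have := Q.disjoint hc hd hcd
    simp only [Function.onFun, id] at this ⊢
    rw [Finset.disjoint_left] at this ⊢
    intro x hx hx'
    simp only [mem_filter] at hx hx'
    exact this hx.2 hx'.2
  sup_parts := by
    ext a
    simp only [Finset.mem_sup, mem_image, id]
    constructor
    · rintro ⟨-, ⟨c, hc, rfl⟩, ha⟩
      exact (mem_filter.1 ha).1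
    · intro ha
      obtain ⟨c, hc, hac⟩ := Q.exists_mem (Finset.mem_map_of_mem f ha)
      exact ⟨_, ⟨c, hc, rfl⟩, mem_filter.2 ⟨ha, hac⟩⟩
  bot_notMem := by
    simp only [bot_eq_empty, mem_image]
    rintro ⟨c, hc, hce⟩
    obtain ⟨y, hy⟩ := Q.nonempty_of_mem_parts hc
    obtain ⟨a, ha, rfl⟩ := Finset.mem_map.1 (Q.le hc hy)
    have : a ∈ s.filter fun a => f a ∈ c := mem_filter.2 ⟨ha, hy⟩
    rw [hce] at this
    exact absurd this (notMem_empty a)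

lemma Finpartition.embComap_part_map (f : α ↪ β) {s : Finset α} (Q : Finpartition (s.map f))
    {b : Finset β} (hb : b ∈ Q.parts) :
    (s.filter fun a => f a ∈ b).map f = b := by
  ext y
  simp only [Finset.mem_map, mem_filter]
  constructor
  · rintro ⟨a, ⟨-, hab⟩, rfl⟩; exact hab
  · intro hy
    obtain ⟨a, ha, rfl⟩ := Finset.mem_map.1 (Q.le hb hy)
    exact ⟨a, ⟨ha, hy⟩, rfl⟩

lemma count_emb (f : α ↪ β) (s : Finset α) (p : ℕ → Prop) :
    Nat.card {P : Finpartition s // ∀ b ∈ P.parts, p b.card}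
      = Nat.card {Q : Finpartition (s.map f) // ∀ b ∈ Q.parts, p b.card} := by
  apply Nat.card_congr
  refine ⟨fun P => ⟨P.1.embMap f, ?_⟩, fun Q => ⟨Q.1.embComap f, ?_⟩, ?_, ?_⟩
  · rintro b hb
    obtain ⟨c, hc, rfl⟩ := Finset.mem_image.1 hb
    rw [Finset.card_map]
    exact P.2 c hc
  · rintro b hb
    obtain ⟨c, hc, rfl⟩ := Finset.mem_image.1 hb
    have hcard := congrArg Finset.card (Q.1.embComap_part_map f hc)
    rw [Finset.card_map] at hcard
    rw [hcard]
    exact Q.2 c hc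
  · rintro ⟨P, hP⟩
    ext1
    ext1
    ext c
    simp only [Finpartition.embMap, Finpartition.embComap, Finset.mem_image]
    constructor
    · rintro ⟨b, ⟨d, hd, rfl⟩, rfl⟩
      convert hd using 1
      ext a
      simp only [mem_filter, Finset.mem_map]
      constructor
      · rintro ⟨ha, a', ha', h⟩
        rwa [← f.injective h]
      · intro ha
        exact ⟨P.le hd ha, a, ha, rfl⟩
    · intro hc
      refine ⟨c.map f, ⟨c, hc, rfl⟩, ?_⟩
      ext a
      simp only [mem_filter, Finset.mem_map]
      constructor
      · rintro ⟨ha, a', ha', h⟩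
        rwa [← f.injective h]
      · intro ha
        exact ⟨P.le hc ha, a, ha, rfl⟩
  · rintro ⟨Q, hQ⟩
    ext1
    ext1
    ext b
    simp only [Finpartition.embMap, Finpartition.embComap, Finset.mem_image]
    constructor
    · rintro ⟨c, ⟨d, hd, rfl⟩, rfl⟩
      rwa [Q.embComap_part_map f hd]
    · intro hb
      exact ⟨_, ⟨_, hb, rfl⟩, Q.embComap_part_map f hb⟩

lemma count_card {γ : Type*} [LinearOrder γ] [DecidableEq γ] (s : Finset γ) {m : ℕ} (h : s.card = m)
    (p : ℕ → Prop) :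
    Nat.card {P : Finpartition s // ∀ b ∈ P.parts, p b.card}
      = Nat.card {P : Finpartition (Finset.univ : Finset (Fin m)) // ∀ b ∈ P.parts, p b.card} := by
  classical
  have hmap : (Finset.univ : Finset (Fin m)).map (s.orderEmbOfFin h).toEmbedding = s := by
    ext x
    simp only [Finset.mem_map, Finset.mem_univ, true_and, RelEmbedding.coe_toEmbedding]
    constructor
    · rintro ⟨i, hi⟩
      rw [← hi]
      exact s.orderEmbOfFin_mem h i
    · intro hx
      have : x ∈ Set.range (s.orderEmbOfFin h) := by
        rw [Finset.range_orderEmbOfFin]; exact hx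
      obtain ⟨i, hi⟩ := this
      exact ⟨i, hi⟩
  rw [← hmap, ← count_emb]

/-- Union of finpartitions of disjoint finsets. -/
def Finpartition.disjUnionParts {t u : Finset α} (P : Finpartition t) (Q : Finpartition u)
    (h : Disjoint t u) : Finpartition (t ∪ u) where
  parts := P.parts ∪ Q.parts
  supIndep := by
    rw [Finset.supIndep_iff_pairwiseDisjoint]
    rintro a ha b hb hab
    simp only [coe_union, Set.mem_union, mem_coe] at ha hb
    simp only [Function.onFun, id]
    rcases ha with ha | ha <;> rcases hb with hb | hb
    · exact P.disjoint ha hb hab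
    · exact h.mono (P.le ha) (Q.le hb)
    · exact h.symm.mono (Q.le ha) (P.le hb)
    · exact Q.disjoint ha hb hab
  sup_parts := by rw [Finset.sup_union, P.sup_parts, Q.sup_parts]; rfl
  bot_notMem := by
    rw [Finset.mem_union]
    rintro (hh | hh)
    · exact P.bot_notMem hh
    · exact Q.bot_notMem hh

lemma nat_card_eq_sum_fibers {γ δ : Type*} [Fintype γ] [DecidableEq δ] (f : γ → δ)
    (T : Finset δ) (h : ∀ x, f x ∈ T) :
    Nat.card γ = ∑ t ∈ T, Nat.card {x : γ // f x = t} := by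
  classical
  simp_rw [Nat.card_eq_fintype_card, Fintype.card_subtype]
  rw [← Finset.card_univ]
  exact Finset.card_eq_sum_card_fiberwise fun x _ => h x

lemma Finpartition.sup_filter_not {s : Finset α} (P : Finpartition s) (p : Finset α → Prop)
    [DecidablePred p] :
    (P.parts.filter fun b => ¬ p b).sup id = s \ (P.parts.filter p).sup id := by
  have hdisj : Disjoint ((P.parts.filter p).sup id)
      ((P.parts.filter fun b => ¬ p b).sup id) := by
    rw [Finset.disjoint_left]
    intro x hx hx'
    rw [Finset.mem_sup] at hx hx'
    obtain ⟨b, hb, hxb⟩ := hx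
    obtain ⟨c, hc, hxc⟩ := hx'
    have hbc : b ≠ c := by
      rintro rfl
      exact (mem_filter.1 hc).2 (mem_filter.1 hb).2
    exact Finset.disjoint_left.1
      (P.disjoint (mem_filter.1 hb).1 (mem_filter.1 hc).1 hbc) hxb hxc
  have hunion : (P.parts.filter p).sup id ∪ ((P.parts.filter fun b => ¬ p b).sup id) = s := by
    have h := Finset.sup_union (s₁ := P.parts.filter p) (s₂ := P.parts.filter fun b => ¬ p b)
      (f := id)
    rw [Finset.filter_union_filter_not_eq] at h
    calc (P.parts.filter p).sup id ∪ ((P.parts.filter fun b => ¬ p b).sup id)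
        = P.parts.sup id := h.symm
      _ = s := P.sup_parts
  calc (P.parts.filter fun b => ¬ p b).sup id
      = ((P.parts.filter p).sup id ∪ ((P.parts.filter fun b => ¬ p b).sup id)) \
          (P.parts.filter p).sup id := (Finset.union_sdiff_cancel_left hdisj).symm
    _ = s \ (P.parts.filter p).sup id := by rw [hunion]

lemma fiber_card (s t : Finset α) (hts : t ⊆ s) (m : ℕ) :
    Nat.card {x : {P : Finpartition s // ∀ b ∈ P.parts, m ≤ b.card} //
        ((x.1.parts.filter fun b => b.card = m).sup id) = t}
      = Nat.card {Q : Finpartition t // ∀ b ∈ Q.parts, b.card = m} *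
        Nat.card {Q : Finpartition (s \ t) // ∀ b ∈ Q.parts, m + 1 ≤ b.card} := by
  rw [← Nat.card_prod]
  apply Nat.card_congr
  refine ⟨fun x => ?_, fun y => ?_, ?_, ?_⟩
  · refine ⟨⟨x.1.1.ofSubset (parts := x.1.1.parts.filter fun b => b.card = m)
        (Finset.filter_subset _ _) x.2,
      fun b hb => (mem_filter.1 hb).2⟩,
      ⟨x.1.1.ofSubset (parts := x.1.1.parts.filter fun b => ¬ b.card = m)
        (Finset.filter_subset _ _)
        (by rw [Finpartition.sup_filter_not, x.2]), fun b hb => ?_⟩⟩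
    have h1 := x.1.2 b (mem_filter.1 hb).1
    have h2 := (mem_filter.1 hb).2
    omega
  · obtain ⟨⟨Q1, h1⟩, ⟨Q2, h2⟩⟩ := y
    refine ⟨⟨(Q1.disjUnionParts Q2 disjoint_sdiff).copy (Finset.union_sdiff_of_subset hts),
      ?_⟩, ?_⟩
    · intro b hb
      simp only [Finpartition.copy, Finpartition.disjUnionParts, Finset.mem_union] at hb
      rcases hb with hb | hb
      · exact le_of_eq (h1 b hb).symm
      · exact le_trans (Nat.le_succ m) (h2 b hb)
    · have hfil : ((Q1.parts ∪ Q2.parts).filter fun b => b.card = m) = Q1.parts := by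
        rw [Finset.filter_union]
        rw [Finset.filter_eq_self.2 h1]
        rw [Finset.filter_false_of_mem (fun b hb => by have := h2 b hb; omega)]
        exact Finset.union_empty _
      show ((Q1.parts ∪ Q2.parts).filter fun b => b.card = m).sup id = t
      rw [hfil, Q1.sup_parts]
  · rintro ⟨⟨P, hP⟩, ht⟩
    apply Subtype.ext
    apply Subtype.ext
    apply Finpartition.ext
    show (P.parts.filter fun b => b.card = m) ∪ (P.parts.filter fun b => ¬ b.card = m) = P.parts
    exact Finset.filter_union_filter_not_eq _ _
  · rintro ⟨⟨Q1, h1⟩, ⟨Q2, h2⟩⟩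
    have hfil : ((Q1.parts ∪ Q2.parts).filter fun b => b.card = m) = Q1.parts := by
      rw [Finset.filter_union]
      rw [Finset.filter_eq_self.2 h1]
      rw [Finset.filter_false_of_mem (fun b hb => by have := h2 b hb; omega)]
      exact Finset.union_empty _
    have hfil' : ((Q1.parts ∪ Q2.parts).filter fun b => ¬ b.card = m) = Q2.parts := by
      rw [Finset.filter_union]
      rw [Finset.filter_false_of_mem (fun b hb => by simp [h1 b hb])]
      rw [Finset.filter_eq_self.2 (fun b hb => by have := h2 b hb; omega)]
      exact Finset.empty_union _
    refine Prod.ext (Subtype.ext (Finpartition.ext ?_)) (Subtype.ext (Finpartition.ext ?_))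
    · exact hfil
    · exact hfil'

lemma count_split (s : Finset α) (m : ℕ) :
    Nat.card {P : Finpartition s // ∀ b ∈ P.parts, m ≤ b.card}
      = ∑ t ∈ s.powerset,
          Nat.card {Q : Finpartition t // ∀ b ∈ Q.parts, b.card = m} *
          Nat.card {Q : Finpartition (s \ t) // ∀ b ∈ Q.parts, m + 1 ≤ b.card} := by
  classical
  rw [nat_card_eq_sum_fibers
    (fun P : {P : Finpartition s // ∀ b ∈ P.parts, m ≤ b.card} =>
      (P.1.parts.filter fun b => b.card = m).sup id)
    s.powerset
    (fun P => Finset.mem_powerset.2 (by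
      intro x hx
      rw [Finset.mem_sup] at hx
      obtain ⟨b, hb, hxb⟩ := hx
      exact P.1.le (mem_filter.1 hb).1 hxb))]
  exact Finset.sum_congr rfl fun t ht => fiber_card s t (Finset.mem_powerset.1 ht) m

lemma count_eq_empty (m : ℕ) :
    Nat.card {P : Finpartition (∅ : Finset α) // ∀ b ∈ P.parts, b.card = m} = 1 := by
  have hparts : ∀ P : Finpartition (∅ : Finset α), P.parts = ∅ := fun P =>
    Finpartition.parts_eq_empty_iff.2 rfl
  have : Unique {P : Finpartition (∅ : Finset α) // ∀ b ∈ P.parts, b.card = m} := by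
    refine ⟨⟨⟨Finpartition.empty (Finset α), ?_⟩⟩, ?_⟩
    · intro b hb
      rw [hparts] at hb
      exact absurd hb (Finset.notMem_empty b)
    · rintro ⟨P, hP⟩
      apply Subtype.ext
      apply Finpartition.ext
      rw [hparts, hparts]
  exact Nat.card_unique

lemma count_eq_step (s : Finset α) {a : α} (ha : a ∈ s) {m : ℕ} (hm : 1 ≤ m) :
    Nat.card {P : Finpartition s // ∀ b ∈ P.parts, b.card = m}
      = ∑ b ∈ s.powerset.filter (fun b => a ∈ b ∧ b.card = m),
          Nat.card {Q : Finpartition (s \ b) // ∀ c ∈ Q.parts, c.card = m} := by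
  classical
  rw [nat_card_eq_sum_fibers
    (fun P : {P : Finpartition s // ∀ b ∈ P.parts, b.card = m} => P.1.part a)
    (s.powerset.filter fun b => a ∈ b ∧ b.card = m)
    (fun P => Finset.mem_filter.2 ⟨Finset.mem_powerset.2 (P.1.le (P.1.part_mem.2 ha)),
      P.1.mem_part ha, P.2 _ (P.1.part_mem.2 ha)⟩)]
  refine Finset.sum_congr rfl fun b hb => ?_
  obtain ⟨hbs, hab, hbm⟩ : b ⊆ s ∧ a ∈ b ∧ b.card = m := by
    have := Finset.mem_filter.1 hb
    exact ⟨Finset.mem_powerset.1 this.1, this.2.1, this.2.2⟩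
  apply Nat.card_congr
  refine ⟨fun x => ?_, fun y => ?_, ?_, ?_⟩
  · -- forward: remove the part b
    have hbP : b ∈ x.1.1.parts := by
      have h := x.1.1.part_mem.2 ha
      rwa [x.2] at h
    have hsup : (x.1.1.parts.erase b).sup id = s \ b := by
      rw [← Finset.filter_ne']
      have h1 := x.1.1.sup_filter_not (fun c => c = b)
      have h2 : (x.1.1.parts.filter fun c => c = b) = {b} := by
        rw [Finset.filter_eq', if_pos hbP]
      rw [h2] at h1
      simpa using h1
    refine ⟨x.1.1.ofSubset (parts := x.1.1.parts.erase b) (Finset.erase_subset _ _) hsup,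
      fun c hc => x.1.2 c (Finset.mem_of_mem_erase hc)⟩
  · -- backward: extend by b
    have hbne : b ≠ (⊥ : Finset α) := by
      intro h
      rw [h] at hbm
      simp at hbm
      omega
    have hdisj : Disjoint (s \ b) b := Finset.sdiff_disjoint
    have hsup : (s \ b) ⊔ b = s := by
      rw [sup_eq_union]
      exact Finset.sdiff_union_of_subset hbs
    refine ⟨⟨y.1.extend hbne hdisj hsup, ?_⟩, ?_⟩
    · intro c hc
      rcases Finset.mem_insert.1 hc with rfl | hc
      · exact hbm
      · exact y.2 c hc
    · exact Finpartition.part_eq_of_mem _ (Finset.mem_insert_self _ _) hab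
  · rintro ⟨⟨P, hP⟩, hPb⟩
    apply Subtype.ext
    apply Subtype.ext
    apply Finpartition.ext
    have hbP : b ∈ P.parts := by
      have h := P.part_mem.2 ha
      rwa [hPb] at h
    show insert b (P.parts.erase b) = P.parts
    exact Finset.insert_erase hbP
  · rintro ⟨Q, hQ⟩
    apply Subtype.ext
    apply Finpartition.ext
    have hbQ : b ∉ Q.parts := by
      intro h
      have := Q.le h hab
      exact absurd this (by simp [hab])
    show (insert b Q.parts).erase b = Q.parts
    exact Finset.erase_insert hbQ

lemma card_filter_subsets (s : Finset α) {a : α} (ha : a ∈ s) {m : ℕ} (hm : 1 ≤ m) :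
    (s.powerset.filter fun b => a ∈ b ∧ b.card = m).card = (s.card - 1).choose (m - 1) := by
  classical
  rw [← Finset.card_erase_of_mem ha, ← Finset.card_powersetCard]
  apply Finset.card_bij (fun b _ => b.erase a)
  · intro b hb
    obtain ⟨hbs, hab, hbm⟩ : b ⊆ s ∧ a ∈ b ∧ b.card = m := by
      have := Finset.mem_filter.1 hb
      exact ⟨Finset.mem_powerset.1 this.1, this.2.1, this.2.2⟩
    rw [Finset.mem_powersetCard]
    exact ⟨Finset.erase_subset_erase a hbs, by rw [Finset.card_erase_of_mem hab, hbm]⟩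
  · intro b1 hb1 b2 hb2 h
    have h1 : a ∈ b1 := (Finset.mem_filter.1 hb1).2.1
    have h2 : a ∈ b2 := (Finset.mem_filter.1 hb2).2.1
    rw [← Finset.insert_erase h1, ← Finset.insert_erase h2, h]
  · intro c hc
    rw [Finset.mem_powersetCard] at hc
    have hac : a ∉ c := fun h => (Finset.mem_erase.1 (hc.1 h)).1 rfl
    refine ⟨insert a c, Finset.mem_filter.2 ⟨Finset.mem_powerset.2 ?_, Finset.mem_insert_self _ _,
      ?_⟩, ?_⟩
    · intro x hx
      rcases Finset.mem_insert.1 hx with rfl | hx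
      · exact ha
      · exact (Finset.erase_subset _ _) (hc.1 hx)
    · rw [Finset.card_insert_of_notMem hac, hc.2]
      omega
    · exact Finset.erase_insert hac

noncomputable def countEQ (n m : ℕ) : ℕ :=
  Nat.card {P : Finpartition (Finset.univ : Finset (Fin n)) // ∀ b ∈ P.parts, b.card = m}

lemma countEQ_zero (m : ℕ) : countEQ 0 m = 1 := by
  rw [countEQ]
  have : (Finset.univ : Finset (Fin 0)) = ∅ := rfl
  rw [this]
  exact count_eq_empty m

lemma countEQ_eq_zero {j m : ℕ} (h : ¬ m ∣ j) : countEQ j m = 0 := by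
  rw [countEQ]
  have : IsEmpty {P : Finpartition (Finset.univ : Finset (Fin j)) // ∀ b ∈ P.parts, b.card = m} := by
    refine ⟨fun P => h ⟨P.1.parts.card, ?_⟩⟩
    have h1 := P.1.sum_card_parts
    rw [Finset.card_univ, Fintype.card_fin] at h1
    have h2 : ∑ b ∈ P.1.parts, b.card = m * P.1.parts.card := by
      rw [Finset.sum_congr rfl (fun b hb => P.2 b hb), Finset.sum_const, smul_eq_mul,
        Nat.mul_comm]
    exact h1.symm.trans h2
  exact Nat.card_of_isEmpty

lemma countEQ_spec (m i : ℕ) (hm : 1 ≤ m) :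
    m.factorial ^ i * i.factorial * countEQ (m * i) m = (m * i).factorial := by
  induction i with
  | zero => simp [countEQ_zero]
  | succ i ih =>
    have hpos : 0 < m * (i + 1) := Nat.mul_pos hm (Nat.succ_pos i)
    have ha : (⟨0, hpos⟩ : Fin (m * (i + 1))) ∈ (Finset.univ : Finset (Fin (m * (i + 1)))) :=
      Finset.mem_univ _
    have hstep := count_eq_step (Finset.univ : Finset (Fin (m * (i + 1)))) ha hm
    -- each fiber has the same count
    have hsummand : ∀ b ∈ (Finset.univ : Finset (Fin (m * (i + 1)))).powerset.filter
        (fun b => (⟨0, hpos⟩ : Fin (m * (i + 1))) ∈ b ∧ b.card = m),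
        Nat.card {Q : Finpartition ((Finset.univ : Finset (Fin (m * (i + 1)))) \ b) //
          ∀ c ∈ Q.parts, c.card = m} = countEQ (m * i) m := by
      intro b hb
      obtain ⟨-, -, hbm⟩ := Finset.mem_filter.1 hb
      have hcard : ((Finset.univ : Finset (Fin (m * (i + 1)))) \ b).card = m * i := by
        rw [Finset.card_sdiff_of_subset (Finset.subset_univ b), Finset.card_univ, Fintype.card_fin, hbm,
          Nat.mul_succ, Nat.add_sub_cancel]
      exact count_card _ hcard (fun c => c = m)
    have hcount : countEQ (m * (i + 1)) m
        = (m * (i + 1) - 1).choose (m - 1) * countEQ (m * i) m := by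
      rw [countEQ, hstep, Finset.sum_congr rfl hsummand, Finset.sum_const, smul_eq_mul,
        card_filter_subsets _ ha hm, Finset.card_univ, Fintype.card_fin]
    -- now pure arithmetic
    set M := m * i with hM
    set C := (m * (i + 1) - 1).choose (m - 1) with hC
    have hMm : m * (i + 1) = M + m := by rw [hM]; ring
    have h2 : (M + m).factorial = (M + m) * (M + m - 1).factorial :=
      (Nat.mul_factorial_pred (show M + m ≠ 0 by omega)).symm
    have h3 : C * (m - 1).factorial * M.factorial = (M + m - 1).factorial := by
      have hkey := Nat.choose_mul_factorial_mul_factorial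
        (n := M + m - 1) (k := m - 1) (by omega)
      have he : M + m - 1 - (m - 1) = M := by omega
      rw [he] at hkey
      rw [hC, hMm]
      exact hkey
    have h1 : m.factorial = m * (m - 1).factorial := (Nat.mul_factorial_pred (by omega : m ≠ 0)).symm
    have hMm' : M + m = m * (i + 1) := hMm.symm
    rw [hcount, hMm, h2, pow_succ, Nat.factorial_succ, ← h3, ← ih, h1, hMm']
    ring

noncomputable def associatedBell' (n m : ℕ) : ℕ :=
  Nat.card {P : Finpartition (Finset.univ : Finset (Fin n)) // ∀ b ∈ P.parts, m ≤ b.card}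

lemma associatedBell_rec (n m : ℕ) (hm : 1 ≤ m) :
    associatedBell' n m = ∑ i ∈ Finset.range (n / m + 1),
      n.choose (m * i) * (countEQ (m * i) m * associatedBell' (n - m * i) (m + 1)) := by
  rw [associatedBell', count_split]
  have hterm : ∀ t ∈ (Finset.univ : Finset (Fin n)).powerset,
      Nat.card {Q : Finpartition t // ∀ b ∈ Q.parts, b.card = m} *
        Nat.card {Q : Finpartition ((Finset.univ : Finset (Fin n)) \ t) //
          ∀ b ∈ Q.parts, m + 1 ≤ b.card}
      = countEQ t.card m * associatedBell' (n - t.card) (m + 1) := by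
    intro t _
    have hcard : ((Finset.univ : Finset (Fin n)) \ t).card = n - t.card := by
      rw [Finset.card_sdiff_of_subset (Finset.subset_univ t), Finset.card_univ, Fintype.card_fin]
    rw [count_card t rfl (fun c => c = m), count_card _ hcard (fun c => m + 1 ≤ c)]
    rfl
  rw [Finset.sum_congr rfl hterm]
  rw [Finset.sum_powerset_apply_card
    (fun j => countEQ j m * associatedBell' (n - j) (m + 1))]
  rw [Finset.card_univ, Fintype.card_fin]
  simp_rw [smul_eq_mul]
  rw [← Finset.sum_filter_of_ne (p := fun j => m ∣ j)
    (fun j _ hne => by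
      by_contra hdvd
      rw [countEQ_eq_zero hdvd] at hne
      simp at hne)]
  refine Finset.sum_nbij' (fun j => j / m) (fun i => m * i) ?_ ?_ ?_ ?_ ?_
  · intro j hj
    obtain ⟨hj1, hj2⟩ := Finset.mem_filter.1 hj
    rw [Finset.mem_range] at hj1 ⊢
    have := Nat.div_le_div_right (c := m) (Nat.lt_succ_iff.1 hj1)
    omega
  · intro i hi
    rw [Finset.mem_range] at hi
    rw [Finset.mem_filter, Finset.mem_range]
    have hle : i ≤ n / m := by omega
    have := (Nat.le_div_iff_mul_le (by omega : 0 < m)).1 hle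
    constructor
    · have h2 : m * i = i * m := Nat.mul_comm m i
      omega
    · exact Dvd.intro i rfl
  · intro j hj
    exact Nat.mul_div_cancel' (Finset.mem_filter.1 hj).2
  · intro i _
    exact Nat.mul_div_cancel_left i (by omega)
  · intro j hj
    rw [Nat.mul_div_cancel' (Finset.mem_filter.1 hj).2]

lemma associatedBell_eq : associatedBell = associatedBell' := rfl

/-- `B_{n,≥k} = B_{n,≥k-1} - ∑_{i=1}^{⌊n/(k-1)⌋} n!/((k-1)!^i·(n-(k-1)i)!·i!) · B_{n-(k-1)i,≥k}`
for `k ≥ 2`. -/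
theorem associatedBell_reduction (n k : ℕ) (hk : 2 ≤ k) :
    (associatedBell n k : ℚ) =
      associatedBell n (k - 1) -
        ∑ i ∈ Finset.Icc 1 (n / (k - 1)),
          (n.factorial : ℚ) /
              ((k - 1).factorial ^ i * (n - (k - 1) * i).factorial * i.factorial) *
            associatedBell (n - (k - 1) * i) k := by
  have hm : 1 ≤ k - 1 := by omega
  have hk1 : k - 1 + 1 = k := by omega
  have hrec := associatedBell_rec n (k - 1) hm
  rw [hk1] at hrec
  rw [associatedBell_eq]
  -- split off the `i = 0` term
  have hins : Finset.range (n / (k - 1) + 1) = insert 0 (Finset.Icc 1 (n / (k - 1))) := by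
    generalize n / (k - 1) = D
    ext x
    simp only [Finset.mem_range, Finset.mem_insert, Finset.mem_Icc]
    omega
  rw [hins, Finset.sum_insert (by simp)] at hrec
  rw [Nat.mul_zero, Nat.choose_zero_right, Nat.sub_zero, countEQ_zero, Nat.one_mul,
    Nat.one_mul] at hrec
  -- cast to ℚ
  have hrecQ := congrArg (Nat.cast : ℕ → ℚ) hrec
  push_cast at hrecQ
  rw [hrecQ]
  have hcoeff : ∀ i ∈ Finset.Icc 1 (n / (k - 1)),
      ((n.choose ((k - 1) * i) : ℚ) * (countEQ ((k - 1) * i) (k - 1) *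
          associatedBell' (n - (k - 1) * i) k))
        = (n.factorial : ℚ) /
            ((k - 1).factorial ^ i * (n - (k - 1) * i).factorial * i.factorial) *
          associatedBell' (n - (k - 1) * i) k := by
    intro i hi
    rw [Finset.mem_Icc] at hi
    have hMn : (k - 1) * i ≤ n := by
      have := (Nat.le_div_iff_mul_le (by omega : 0 < k - 1)).1 hi.2
      have h2 : (k - 1) * i = i * (k - 1) := Nat.mul_comm _ _
      omega
    have e1 := countEQ_spec (k - 1) i hm
    have e2 := Nat.choose_mul_factorial_mul_factorial hMn
    have hnat : n.choose ((k - 1) * i) * countEQ ((k - 1) * i) (k - 1) *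
        ((k - 1).factorial ^ i * (n - (k - 1) * i).factorial * i.factorial) = n.factorial := by
      calc n.choose ((k - 1) * i) * countEQ ((k - 1) * i) (k - 1) *
            ((k - 1).factorial ^ i * (n - (k - 1) * i).factorial * i.factorial)
          = n.choose ((k - 1) * i) *
              ((k - 1).factorial ^ i * i.factorial * countEQ ((k - 1) * i) (k - 1)) *
              (n - (k - 1) * i).factorial := by ring
        _ = n.choose ((k - 1) * i) * ((k - 1) * i).factorial * (n - (k - 1) * i).factorial := by
              rw [e1]
        _ = n.factorial := e2
    have hden : ((k - 1).factorial ^ i * (n - (k - 1) * i).factorial * i.factorial : ℚ) ≠ 0 := by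
      positivity
    have hQ : (n.choose ((k - 1) * i) : ℚ) * countEQ ((k - 1) * i) (k - 1)
        = (n.factorial : ℚ) /
            ((k - 1).factorial ^ i * (n - (k - 1) * i).factorial * i.factorial) := by
      rw [eq_div_iff hden]
      exact_mod_cast congrArg (Nat.cast : ℕ → ℚ) hnat
    rw [← hQ]
    ring
  rw [Finset.sum_congr rfl hcoeff]
  ring
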